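/- Let T be an inverse semigroup, A a T-module, and consider the crossed module extension A → N → S → T constructed from a strongly normalized c ∈ Z³_≤(T¹,A¹), where S is the E-unitary cover of T through FG(T). If T is an F-inverse monoid, then both π : S → T and β : N → S admit order-preserving transversals respecting idempotents; explicitly, σ(e, w) = (θ(e), e, w) is such a transversal of β, and ρ(t) = (t, [max t]) for t ∉ E(T), ρ(e) = (e, ε) for e ∈ E(T), is such a transversal of π. -/

import Mathlib

/-- An inverse semigroup: every element `s` has a (unique) inverse `s⁻¹`
with `s * s⁻¹ * s = s` and `s⁻¹ * s * s⁻¹ = s⁻¹`. -/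
class InverseSemigroup (S : Type*) extends Semigroup S, Inv S where
  mul_inv_mul : ∀ s : S, s * s⁻¹ * s = s
  inv_mul_inv : ∀ s : S, s⁻¹ * s * s⁻¹ = s⁻¹
  inv_unique : ∀ s t : S, s * t * s = s → t * s * t = t → t = s⁻¹

namespace InverseSemigroup

/-- The set of idempotents of a multiplicative structure. -/
def E (S : Type*) [Mul S] : Set S := {e | e * e = e}

/-- The natural partial order: `s ≤ t` iff `s = s * s⁻¹ * t`. -/
def nle {S : Type*} [Mul S] [Inv S] (s t : S) : Prop := s = s * s⁻¹ * t

/-- `r s = s * s⁻¹`. -/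
def r {S : Type*} [Mul S] [Inv S] (s : S) : S := s * s⁻¹

/-- A Clifford semigroup (semilattice of groups): idempotents are central. -/
def IsClifford (S : Type*) [Mul S] : Prop := ∀ e ∈ E S, ∀ s : S, e * s = s * e

end InverseSemigroup

open InverseSemigroup

/-- Evaluate a word over the alphabet `T ⊔ T⁻¹` (encoded as `List (T × Bool)`,
with `(x, true) = [x]` and `(x, false) = [x]⁻¹`) in `T¹ = WithOne T`;
the empty word evaluates to `1`. -/
def evalWord {T : Type*} [InverseSemigroup T] (l : List (T × Bool)) : WithOne T :=
  l.foldr (fun p acc => (↑(if p.2 then p.1 else p.1⁻¹) : WithOne T) * acc) 1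

/-- The map `ν : FG(T) → T¹` evaluating the reduced word of an element of the free
group on `T`; `ν(ε) = 1`. -/
def nu {T : Type*} [InverseSemigroup T] [DecidableEq T] (w : FreeGroup T) : WithOne T :=
  evalWord (FreeGroup.toWord w)

/-- Membership in the `E`-unitary cover `S = {(t,w) ∈ T × FG(T) | t ≤ ν(w)}`. -/
def Pcov {T : Type*} [InverseSemigroup T] [DecidableEq T] (p : T × FreeGroup T) : Prop :=
  nle (p.1 : WithOne T) (nu p.2)

/-- Membership in `N = {(a,e,w) | a ∈ A_{θ(e)}, e ∈ E(T), e ≤ ν(w)}`. -/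
def QN {T A : Type*} [InverseSemigroup T] [InverseSemigroup A] [DecidableEq T]
    (θ : T → A) (n : A × T × FreeGroup T) : Prop :=
  n.2.1 ∈ E T ∧ n.1 * n.1⁻¹ = θ n.2.1 ∧ nle (n.2.1 : WithOne T) (nu n.2.2)

/-- The transversal `σ(e, w) = (θ(e), e, w)` of `β`. -/
def sigmaF {T A : Type*} [InverseSemigroup T] (θ : T → A) (p : T × FreeGroup T) :
    A × T × FreeGroup T :=
  (θ p.1, p.1, p.2)

/-- The transversal `ρ(t) = (t, [max t])` for `t ∉ E(T)`, `ρ(e) = (e, ε)` for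
idempotent `e`, of `π`, where `max` is the maximum element of the `σ`-class. -/
def rhoF {T : Type*} [InverseSemigroup T] [DecidableEq T] (mx : T → T) (t : T) :
    T × FreeGroup T :=
  if t * t = t then (t, (1 : FreeGroup T)) else (t, FreeGroup.of (mx t))

/-!
In an `F`-inverse monoid an element `t` is idempotent iff `max t = 1`, and elements related
by the natural order lie in the same `σ`-class and so share their maximum. Hence `t ≤ u` forces
`t` and `u` to be both idempotent or both not, and in either case `ρ t ≤ ρ u` componentwise;
moreover `t ≤ max t = ν [max t]`, so `ρ t` lies in the cover. The properties of `σ` reduce to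
`θ` mapping idempotents to idempotents multiplicatively, hence monotonically.
-/

namespace InverseSemigroup

section Basic

variable {S : Type*} [InverseSemigroup S]

theorem inv_eq_self_of_mem_E {e : S} (he : e ∈ E S) : e⁻¹ = e :=
  (inv_unique e e (by rw [he, he]) (by rw [he, he])).symm

theorem nle_refl (s : S) : nle s s :=
  (mul_inv_mul s).symm

theorem mul_inv_mem_E (s : S) : s * s⁻¹ ∈ E S := by
  change s * s⁻¹ * (s * s⁻¹) = s * s⁻¹
  rw [← mul_assoc, mul_inv_mul]

theorem nle_iff_eq_mul_of_mem_E {e : S} (he : e ∈ E S) (s : S) : nle e s ↔ e = e * s := by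
  rw [nle, inv_eq_self_of_mem_E he, he]

theorem nle_of_mem_E_of_mul_one {one : S} (hone : ∀ s : S, s * one = s) {e : S}
    (he : e ∈ E S) : nle e one :=
  (nle_iff_eq_mul_of_mem_E he one).2 (hone e).symm

theorem nle_map_of_mem_E {S' : Type*} [InverseSemigroup S'] {f : S → S'}
    (hfE : ∀ e ∈ E S, f e ∈ E S') (hfmul : ∀ e ∈ E S, ∀ e' ∈ E S, f (e * e') = f e * f e')
    {e e' : S} (he : e ∈ E S) (he' : e' ∈ E S) (h : nle e e') : nle (f e) (f e') := by
  rw [nle_iff_eq_mul_of_mem_E he] at h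
  rw [nle_iff_eq_mul_of_mem_E (hfE e he), ← hfmul e he e' he', ← h]

end Basic

section FInverse

variable {S : Type*} [InverseSemigroup S] {one : S} (hone : ∀ s : S, one * s = s ∧ s * one = s)
  {mx : S → S} (hmx1 : ∀ s : S, nle s (mx s))
  (hmx2 : ∀ s t : S, (∃ u : S, nle u s ∧ nle u t) → mx s = mx t)
include hone hmx1 hmx2

omit hone hmx1 in
theorem max_eq_of_nle {s t : S} (h : nle s t) : mx s = mx t :=
  hmx2 s t ⟨s, nle_refl s, h⟩

theorem max_eq_one_of_mem_E {e : S} (he : e ∈ E S) : mx e = one := by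
  have hone_mem : one ∈ E S := (hone one).1
  have h := hmx1 one
  rw [nle, inv_eq_self_of_mem_E hone_mem, hone_mem, (hone (mx one)).1] at h
  rw [hmx2 e one ⟨e, nle_refl e, nle_of_mem_E_of_mul_one (fun s => (hone s).2) he⟩]
  exact h.symm

omit hmx2 in
theorem mem_E_of_max_eq_one {s : S} (h : mx s = one) : s ∈ E S := by
  have hs := hmx1 s
  rw [nle, h, (hone _).2] at hs
  change s * s = s
  rw [hs]
  exact mul_inv_mem_E s

theorem mem_E_iff_max_eq_one {s : S} : s ∈ E S ↔ mx s = one :=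
  ⟨max_eq_one_of_mem_E hone hmx1 hmx2, mem_E_of_max_eq_one hone hmx1⟩

theorem mem_E_iff_of_nle {s t : S} (h : nle s t) : s ∈ E S ↔ t ∈ E S := by
  rw [mem_E_iff_max_eq_one hone hmx1 hmx2, mem_E_iff_max_eq_one hone hmx1 hmx2,
    max_eq_of_nle hmx2 h]

end FInverse

theorem nle_prod_iff {M N : Type*} [Mul M] [Inv M] [Mul N] [Inv N] {p q : M × N} :
    nle p q ↔ nle p.1 q.1 ∧ nle p.2 q.2 :=
  Prod.ext_iff

theorem mem_E_prod_iff {M N : Type*} [Mul M] [Mul N] {p : M × N} :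
    p ∈ E (M × N) ↔ p.1 ∈ E M ∧ p.2 ∈ E N :=
  Prod.ext_iff

theorem nle_iff_eq {G : Type*} [Group G] {g h : G} : nle g h ↔ g = h := by
  simp [nle]

theorem coe_nle_coe_iff {S : Type*} [Mul S] [Inv S] {s t : S} :
    nle (s : WithOne S) t ↔ nle s t := by
  rw [nle, nle, ← WithOne.coe_inv, ← WithOne.coe_mul, ← WithOne.coe_mul, WithOne.coe_inj]

theorem coe_nle_one_of_mem_E {S : Type*} [InverseSemigroup S] {e : S} (he : e ∈ E S) :
    nle (e : WithOne S) 1 := by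
  rw [nle, mul_one, ← WithOne.coe_inv, ← WithOne.coe_mul, inv_eq_self_of_mem_E he, he]

end InverseSemigroup

open InverseSemigroup

section Cover

variable {T : Type*} [InverseSemigroup T]

theorem sigmaF_mem_E {A : Type*} [Mul A] {θ : T → A} (hθE : ∀ e ∈ E T, θ e ∈ E A)
    {p : T × FreeGroup T} (hp : p ∈ E (T × FreeGroup T)) :
    sigmaF θ p ∈ E (A × T × FreeGroup T) := by
  obtain ⟨hp1, hp2⟩ := mem_E_prod_iff.1 hp
  exact mem_E_prod_iff.2 ⟨hθE p.1 hp1, mem_E_prod_iff.2 ⟨hp1, hp2⟩⟩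

theorem sigmaF_nle {A : Type*} [InverseSemigroup A] {θ : T → A}
    (hθE : ∀ e ∈ E T, θ e ∈ E A) (hθmul : ∀ e ∈ E T, ∀ f ∈ E T, θ (e * f) = θ e * θ f)
    {p q : T × FreeGroup T} (hpE : p.1 ∈ E T) (hqE : q.1 ∈ E T) (h : nle p q) :
    nle (sigmaF θ p) (sigmaF θ q) := by
  obtain ⟨h1, h2⟩ := nle_prod_iff.1 h
  exact nle_prod_iff.2 ⟨nle_map_of_mem_E hθE hθmul hpE hqE h1, nle_prod_iff.2 ⟨h1, h2⟩⟩

variable [DecidableEq T]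

theorem nu_one : nu (1 : FreeGroup T) = 1 := by
  rw [nu, FreeGroup.toWord_one]
  rfl

theorem nu_of (t : T) : nu (FreeGroup.of t) = t := by
  rw [nu, FreeGroup.toWord_of]
  exact mul_one _

theorem qN_sigmaF {A : Type*} [InverseSemigroup A] {θ : T → A} (hθE : ∀ e ∈ E T, θ e ∈ E A)
    {p : T × FreeGroup T} (hpE : p.1 ∈ E T) (hp : Pcov p) : QN θ (sigmaF θ p) := by
  refine ⟨hpE, ?_, hp⟩
  change θ p.1 * (θ p.1)⁻¹ = θ p.1
  rw [inv_eq_self_of_mem_E (hθE p.1 hpE)]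
  exact hθE p.1 hpE

variable {mx : T → T}

theorem rhoF_of_mem_E {e : T} (he : e ∈ E T) : rhoF mx e = (e, 1) :=
  if_pos he

theorem rhoF_of_not_mem_E {t : T} (ht : t ∉ E T) : rhoF mx t = (t, FreeGroup.of (mx t)) :=
  if_neg ht

theorem rhoF_fst (t : T) : (rhoF mx t).1 = t := by
  unfold rhoF
  split_ifs <;> rfl

theorem pcov_rhoF (hmx1 : ∀ t : T, nle t (mx t)) (t : T) : Pcov (rhoF mx t) := by
  by_cases ht : t ∈ E T
  · rw [Pcov, rhoF_of_mem_E ht, nu_one]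
    exact coe_nle_one_of_mem_E ht
  · rw [Pcov, rhoF_of_not_mem_E ht, nu_of, coe_nle_coe_iff]
    exact hmx1 t

theorem rhoF_mem_E {e : T} (he : e ∈ E T) : rhoF mx e ∈ E (T × FreeGroup T) := by
  rw [rhoF_of_mem_E he]
  exact mem_E_prod_iff.2 ⟨he, mul_one 1⟩

theorem rhoF_nle {one : T} (hone : ∀ t : T, one * t = t ∧ t * one = t)
    (hmx1 : ∀ t : T, nle t (mx t))
    (hmx2 : ∀ s t : T, (∃ u : T, nle u s ∧ nle u t) → mx s = mx t)
    {t u : T} (h : nle t u) : nle (rhoF mx t) (rhoF mx u) := by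
  by_cases ht : t ∈ E T
  · have hu : u ∈ E T := (mem_E_iff_of_nle hone hmx1 hmx2 h).1 ht
    rw [rhoF_of_mem_E ht, rhoF_of_mem_E hu]
    exact nle_prod_iff.2 ⟨h, nle_iff_eq.2 rfl⟩
  · have hu : u ∉ E T := fun hu => ht ((mem_E_iff_of_nle hone hmx1 hmx2 h).2 hu)
    rw [rhoF_of_not_mem_E ht, rhoF_of_not_mem_E hu, max_eq_of_nle hmx2 h]
    exact nle_prod_iff.2 ⟨h, nle_iff_eq.2 rfl⟩

end Cover

theorem cover_admissible_of_F_inverse_general {T A : Type*}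
    [InverseSemigroup T] [InverseSemigroup A] [DecidableEq T]
    -- T is a monoid
    (one : T) (hone : ∀ t : T, one * t = t ∧ t * one = t)
    -- T is F-inverse: mx t is the maximum of the σ-class of t
    (mx : T → T)
    (hmx1 : ∀ t : T, nle t (mx t))
    (hmx2 : ∀ s t : T, (∃ u : T, nle u s ∧ nle u t) → mx s = mx t)
    (θ : T → A)
    (hθE : ∀ e ∈ E T, θ e ∈ E A)
    (hθmul : ∀ e ∈ E T, ∀ f ∈ E T, θ (e * f) = θ e * θ f)
    :
    -- σ is a transversal of β defined on β(N) = K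
    (∀ p : T × FreeGroup T, p.1 ∈ E T → Pcov p →
      QN θ (sigmaF θ p) ∧ ((sigmaF θ p).2.1, (sigmaF θ p).2.2) = p) ∧
    -- σ respects idempotents
    (∀ p : T × FreeGroup T, Pcov p → p * p = p →
      sigmaF θ p * sigmaF θ p = sigmaF θ p) ∧
    -- σ is order-preserving
    (∀ p q : T × FreeGroup T, p.1 ∈ E T → q.1 ∈ E T → Pcov p → Pcov q →
      nle p q → nle (sigmaF θ p) (sigmaF θ q)) ∧
    -- ρ is a transversal of π
    (∀ t : T, Pcov (rhoF mx t) ∧ (rhoF mx t).1 = t) ∧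
    -- ρ respects idempotents
    (∀ e ∈ E T, rhoF mx e * rhoF mx e = rhoF mx e) ∧
    -- ρ is order-preserving
    (∀ t u : T, nle t u → nle (rhoF mx t) (rhoF mx u)) :=
  ⟨fun _ hpE hp => ⟨qN_sigmaF hθE hpE hp, rfl⟩,
    fun _ _ hp => sigmaF_mem_E hθE hp,
    fun _ _ hpE hqE _ _ h => sigmaF_nle hθE hθmul hpE hqE h,
    fun t => ⟨pcov_rhoF hmx1 t, rhoF_fst t⟩,
    fun _ he => rhoF_mem_E he,
    fun _ _ h => rhoF_nle hone hmx1 hmx2 h⟩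

/-- If `T` is an `F`-inverse monoid, then in the crossed module extension
`A → N → S → T` built on the `E`-unitary cover of `T` through `FG(T)`, both `β` and
`π` admit order-preserving transversals respecting idempotents: explicitly `σ` and
`ρ` as above. -/
theorem cover_admissible_of_F_inverse {T A : Type*}
    [InverseSemigroup T] [InverseSemigroup A] [DecidableEq T]
    -- T is a monoid
    (one : T) (hone : ∀ t : T, one * t = t ∧ t * one = t)
    -- T is F-inverse: mx t is the maximum of the σ-class of t
    (mx : T → T)
    (hmx1 : ∀ t : T, nle t (mx t))
    (hmx2 : ∀ s t : T, (∃ u : T, nle u s ∧ nle u t) → mx s = mx t)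
    (θ : T → A) (η : T → A → A)
    (hAcomm : ∀ a b : A, a * b = b * a)
    (hθE : ∀ e ∈ E T, θ e ∈ E A)
    (hθinj : ∀ e ∈ E T, ∀ f ∈ E T, θ e = θ f → e = f)
    (hθsurj : ∀ a ∈ E A, ∃ e ∈ E T, θ e = a)
    (hθmul : ∀ e ∈ E T, ∀ f ∈ E T, θ (e * f) = θ e * θ f)
    (hηhom : ∀ t u : T, ∀ a : A, η (t * u) a = η t (η u a))
    (hηmul : ∀ t : T, ∀ a b : A, η t (a * b) = η t a * η t b)
    (hη1 : ∀ e ∈ E T, ∀ a : A, η e a = θ e * a)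
    (hη2 : ∀ t : T, ∀ e ∈ E T, η t (θ e) = θ (t * e * t⁻¹))
    :
    -- σ is a transversal of β defined on β(N) = K
    (∀ p : T × FreeGroup T, p.1 ∈ E T → Pcov p →
      QN θ (sigmaF θ p) ∧ ((sigmaF θ p).2.1, (sigmaF θ p).2.2) = p) ∧
    -- σ respects idempotents
    (∀ p : T × FreeGroup T, Pcov p → p * p = p →
      sigmaF θ p * sigmaF θ p = sigmaF θ p) ∧
    -- σ is order-preserving
    (∀ p q : T × FreeGroup T, p.1 ∈ E T → q.1 ∈ E T → Pcov p → Pcov q →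
      nle p q → nle (sigmaF θ p) (sigmaF θ q)) ∧
    -- ρ is a transversal of π
    (∀ t : T, Pcov (rhoF mx t) ∧ (rhoF mx t).1 = t) ∧
    -- ρ respects idempotents
    (∀ e ∈ E T, rhoF mx e * rhoF mx e = rhoF mx e) ∧
    -- ρ is order-preserving
    (∀ t u : T, nle t u → nle (rhoF mx t) (rhoF mx u)) :=
  cover_admissible_of_F_inverse_general one hone mx hmx1 hmx2 θ hθE hθmul
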